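/- Define f : ℝ → ℝ by f(x) = ((1+x)/2)·log(1+x) + ((1−x)/2)·log(1−x). Then for all r_x, r_y, r_z ∈ ℝ with r_x² + r_y² + r_z² ≤ 1, the strong entanglement asymmetry of the qubit Bloch state with respect to the ℤ₂ (or U(1)) symmetry generated by Pauli Z is nonnegative: log 2 − 2·f(r_z) + f(√(r_x² + r_y² + r_z²)) ≥ 0. Moreover, if r_z = 1 or r_z = −1 then this quantity equals 0. -/

import Mathlib

noncomputable section

/-- The binary-entropy-like function `f(x) = ((1+x)/2)·log(1+x) + ((1−x)/2)·log(1−x)`. -/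
def fAsym (x : ℝ) : ℝ :=
  ((1 + x) / 2) * Real.log (1 + x) + ((1 - x) / 2) * Real.log (1 - x)

lemma fAsym_even (x : ℝ) : fAsym (-x) = fAsym x := by
  unfold fAsym
  rw [show (1 + -x) = 1 - x by ring, show (1 - -x) = 1 + x by ring]
  ring

lemma fAsym_one : fAsym 1 = Real.log 2 := by
  norm_num [fAsym]

lemma fAsym_zero : fAsym 0 = 0 := by
  norm_num [fAsym]

lemma continuous_fAsym : Continuous fAsym := by
  have h := Real.continuous_mul_log
  have h1 : Continuous fun x : ℝ => (1 + x) * Real.log (1 + x) :=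
    h.comp (continuous_const.add continuous_id)
  have h2 : Continuous fun x : ℝ => (1 - x) * Real.log (1 - x) :=
    h.comp (continuous_const.sub continuous_id)
  have : Continuous fun x : ℝ =>
      ((1 + x) * Real.log (1 + x)) / 2 + ((1 - x) * Real.log (1 - x)) / 2 :=
    (h1.div_const 2).add (h2.div_const 2)
  convert this using 2 with x
  unfold fAsym
  ring

lemma hasDerivAt_fAsym (x : ℝ) (h1 : (1 : ℝ) + x ≠ 0) (h2 : (1 : ℝ) - x ≠ 0) :
    HasDerivAt fAsym ((Real.log (1 + x) - Real.log (1 - x)) / 2) x := by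
  have A : HasDerivAt (fun y : ℝ => 1 + y) 1 x := (hasDerivAt_id x).const_add 1
  have B : HasDerivAt (fun y : ℝ => 1 - y) (-1) x := (hasDerivAt_id x).const_sub 1
  have L1 : HasDerivAt (fun y : ℝ => Real.log (1 + y)) ((1 + x)⁻¹ * 1) x :=
    (Real.hasDerivAt_log h1).comp x A
  have L2 : HasDerivAt (fun y : ℝ => Real.log (1 - y)) ((1 - x)⁻¹ * (-1)) x :=
    (Real.hasDerivAt_log h2).comp x B
  have P1 := (A.div_const 2).mul L1
  have P2 := (B.div_const 2).mul L2
  have S := P1.add P2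
  convert S using 1
  · rfl
  · rfl
  · rfl
  · field_simp
    ring

lemma fAsym_monotoneOn : MonotoneOn fAsym (Set.Icc (0 : ℝ) 1) := by
  apply monotoneOn_of_deriv_nonneg (convex_Icc 0 1) continuous_fAsym.continuousOn
  · intro x hx
    rw [interior_Icc] at hx
    exact ((hasDerivAt_fAsym x (by linarith [hx.1]) (by linarith [hx.2])).differentiableAt).differentiableWithinAt
  · intro x hx
    rw [interior_Icc] at hx
    have h1 : (0 : ℝ) < 1 + x := by linarith [hx.1]
    have h2 : (0 : ℝ) < 1 - x := by linarith [hx.2]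
    rw [(hasDerivAt_fAsym x h1.ne' h2.ne').deriv]
    have : Real.log (1 - x) ≤ Real.log (1 + x) :=
      Real.log_le_log h2 (by linarith [hx.1])
    linarith

lemma fAsym_abs (x : ℝ) : fAsym x = fAsym |x| := by
  rcases abs_cases x with ⟨he, _⟩ | ⟨he, _⟩
  · rw [he]
  · rw [he, fAsym_even]

/-- **The strong entanglement asymmetry of a qubit Bloch state with respect to the `ℤ₂`
(or `U(1)`) symmetry generated by Pauli Z is nonnegative, and vanishes at `r_z = ±1`.** -/
theorem strong_asym_qubit_nonneg (rx ry rz : ℝ) (h : rx ^ 2 + ry ^ 2 + rz ^ 2 ≤ 1) :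
    0 ≤ Real.log 2 - 2 * fAsym rz + fAsym (Real.sqrt (rx ^ 2 + ry ^ 2 + rz ^ 2)) ∧
    ((rz = 1 ∨ rz = -1) →
      Real.log 2 - 2 * fAsym rz + fAsym (Real.sqrt (rx ^ 2 + ry ^ 2 + rz ^ 2)) = 0) := by
  set s := Real.sqrt (rx ^ 2 + ry ^ 2 + rz ^ 2) with hs_def
  have hs0 : 0 ≤ s := Real.sqrt_nonneg _
  have hs1 : s ≤ 1 := Real.sqrt_le_one.mpr h
  have habs : |rz| ≤ s := by
    rw [← Real.sqrt_sq_eq_abs]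
    exact Real.sqrt_le_sqrt (by nlinarith [sq_nonneg rx, sq_nonneg ry])
  have hmono : fAsym |rz| ≤ fAsym s :=
    fAsym_monotoneOn ⟨abs_nonneg rz, le_trans habs hs1⟩ ⟨hs0, hs1⟩ habs
  have hle : fAsym s ≤ Real.log 2 := by
    rw [← fAsym_one]
    exact fAsym_monotoneOn ⟨hs0, hs1⟩ ⟨zero_le_one, le_refl 1⟩ hs1
  have hrz : fAsym rz = fAsym |rz| := fAsym_abs rz
  constructor
  · linarith
  · intro hcase
    have hrz2 : rz ^ 2 = 1 := by rcases hcase with h1 | h1 <;> rw [h1] <;> norm_num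
    have hsum : rx ^ 2 + ry ^ 2 + rz ^ 2 = 1 := by
      nlinarith [sq_nonneg rx, sq_nonneg ry]
    have hs : s = 1 := by rw [hs_def, hsum, Real.sqrt_one]
    have hfz : fAsym rz = Real.log 2 := by
      rcases hcase with h1 | h1
      · rw [h1, fAsym_one]
      · rw [h1, show (-1 : ℝ) = -(1 : ℝ) by norm_num, fAsym_even, fAsym_one]
    rw [hs, hfz, fAsym_one]
    ring

end
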